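/- arXiv:1206.7097 — 2 statements merged into one kernel-verified Lean document; each statement's English description precedes it below -/
import Mathlib

section
/- Let φ ∈ H be a unit vector, let λ₂ > 1 and b₁ ∈ ℝ, and suppose: (i) Φ(z) ≥ ½(1 − λ₂)⟨Tz, z⟩ + b₁ for all z ∈ H, and (ii) ⟨Tw, w⟩ ≤ ‖w‖²/λ₂ for every w ∈ H orthogonal to φ. Then J(w) ≥ b₁ for every w ∈ H orthogonal to φ. -/
theorem bounded_below_on_orthogonal_complement_general
    {H : Type*} [NormedAddCommGroup H] [InnerProductSpace ℝ H]
    (T : H →L[ℝ] H)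
    (Φ J : H → ℝ)
    (hJ : ∀ z : H, J z = 1 / 2 * ‖z‖ ^ 2 - 1 / 2 * (inner ℝ (T z) z : ℝ) + Φ z)
    (φ : H)
    (lam₂ b₁ : ℝ) (hlam₂ : 1 < lam₂)
    (hH1 : ∀ z : H, Φ z ≥ 1 / 2 * (1 - lam₂) * (inner ℝ (T z) z : ℝ) + b₁)
    (hvar : ∀ w : H, (inner ℝ w φ : ℝ) = 0 → (inner ℝ (T w) w : ℝ) ≤ ‖w‖ ^ 2 / lam₂) :
    ∀ w : H, (inner ℝ w φ : ℝ) = 0 → J w ≥ b₁ := by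
  intro w hw
  have hquad : lam₂ * inner ℝ (T w) w ≤ ‖w‖ ^ 2 :=
    (le_div_iff₀' (by linarith)).mp (hvar w hw)
  calc b₁ ≤ 1 / 2 * (‖w‖ ^ 2 - lam₂ * inner ℝ (T w) w) + b₁ := by linarith
    _ ≤ J w := by rw [hJ w]; linarith [hH1 w]

/-- Under condition (H1) and the variational inequality on `φ^⊥`, the energy
functional is bounded below by `b₁` on the orthogonal complement of the first
eigenfunction: part (c) of the saddle geometry proposition. -/
theorem bounded_below_on_orthogonal_complement
    {H : Type*} [NormedAddCommGroup H] [InnerProductSpace ℝ H]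
    (T : H →L[ℝ] H)
    (Φ J : H → ℝ)
    (hJ : ∀ z : H, J z = 1 / 2 * ‖z‖ ^ 2 - 1 / 2 * (inner ℝ (T z) z : ℝ) + Φ z)
    (φ : H) (hφ : ‖φ‖ = 1)
    (lam₂ b₁ : ℝ) (hlam₂ : 1 < lam₂)
    (hH1 : ∀ z : H, Φ z ≥ 1 / 2 * (1 - lam₂) * (inner ℝ (T z) z : ℝ) + b₁)
    (hvar : ∀ w : H, (inner ℝ w φ : ℝ) = 0 → (inner ℝ (T w) w : ℝ) ≤ ‖w‖ ^ 2 / lam₂) :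
    ∀ w : H, (inner ℝ w φ : ℝ) = 0 → J w ≥ b₁ :=
  bounded_below_on_orthogonal_complement_general T Φ J hJ φ lam₂ b₁ hlam₂ hH1 hvar
end

section
/- Suppose λ₁ > 0 and: (i) 0 ≤ ⟨Tz, z⟩ ≤ ‖z‖²/λ₁ for all z ∈ H; (ii) there are α ∈ (0, λ₁), p > 2 and C ≥ 0 such that Φ(z) ≥ ((1 − α)/2)⟨Tz, z⟩ − C‖z‖ᵖ for all z ∈ H; (iii) Φ(0) = 0. Then there exists ρ₀ > 0 such that J(z) ≥ ¼(1 − α/λ₁)‖z‖² > 0 for every z with 0 < ‖z‖ ≤ ρ₀; in particular the origin is a strict local minimum of J. -/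
/-! Using `Φ z ≥ ((1 - α)/2)⟨Tz, z⟩ - C‖z‖ᵖ` and `⟨Tz, z⟩ ≤ ‖z‖²/λ₁`, the energy satisfies
`J z ≥ ½(1 - α/λ₁)‖z‖² - C‖z‖ᵖ`. Since `p > 2`, the term `C‖z‖ᵖ` is `o(‖z‖²)` at the origin,
so near `0` it absorbs at most half of the quadratic lower bound. -/

open Filter Topology Set

theorem eventually_mul_rpow_le_mul_sq {C k p : ℝ} (hk : 0 < k) (hp : 2 < p) :
    ∀ᶠ r in 𝓝[>] (0 : ℝ), C * r ^ p ≤ k * r ^ 2 := by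
  have h_tendsto : Tendsto (fun r : ℝ => C * r ^ (p - 2)) (𝓝[>] 0) (𝓝 0) := by
    have h := (Real.continuousAt_rpow_const 0 (p - 2) (Or.inr (by linarith))).tendsto
    rw [Real.zero_rpow (by linarith)] at h
    simpa using (h.const_mul C).mono_left nhdsWithin_le_nhds
  filter_upwards [h_tendsto.eventually (gt_mem_nhds hk), self_mem_nhdsWithin]
    with r hr (hr_pos : 0 < r)
  have h_split : r ^ p = r ^ (p - 2) * r ^ 2 := by
    rw [Real.rpow_sub hr_pos, Real.rpow_two, div_mul_cancel₀ _ (by positivity)]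
  rw [h_split, ← mul_assoc]
  exact mul_le_mul_of_nonneg_right hr.le (by positivity)

theorem exists_forall_mul_rpow_le_mul_sq {C k p : ℝ} (hk : 0 < k) (hp : 2 < p) :
    ∃ ρ > 0, ∀ r : ℝ, 0 < r → r ≤ ρ → C * r ^ p ≤ k * r ^ 2 := by
  obtain ⟨ρ, hρ, h_sub⟩ :=
    mem_nhdsGT_iff_exists_Ioc_subset.mp (eventually_mul_rpow_le_mul_sq hk hp)
  exact ⟨ρ, hρ, fun r hr hrρ => h_sub ⟨hr, hrρ⟩⟩

theorem energy_ge_sub_rpow {H : Type*} [NormedAddCommGroup H] [InnerProductSpace ℝ H]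
    (T : H →L[ℝ] H) (Φ J : H → ℝ)
    (hJ : ∀ z : H, J z = 1 / 2 * ‖z‖ ^ 2 - 1 / 2 * (inner ℝ (T z) z : ℝ) + Φ z)
    {lam₁ α p C : ℝ} (hT : ∀ z : H, (inner ℝ (T z) z : ℝ) ≤ ‖z‖ ^ 2 / lam₁)
    (hα : 0 ≤ α) (hΦ : ∀ z : H, Φ z ≥ (1 - α) / 2 * (inner ℝ (T z) z : ℝ) - C * ‖z‖ ^ p)
    (z : H) : 1 / 2 * (1 - α / lam₁) * ‖z‖ ^ 2 - C * ‖z‖ ^ p ≤ J z := by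
  have hTz : α * (inner ℝ (T z) z : ℝ) ≤ α / lam₁ * ‖z‖ ^ 2 := by
    calc α * (inner ℝ (T z) z : ℝ) ≤ α * (‖z‖ ^ 2 / lam₁) := mul_le_mul_of_nonneg_left (hT z) hα
      _ = α / lam₁ * ‖z‖ ^ 2 := by ring
  linarith [hJ z, hΦ z]

theorem origin_is_strict_local_min_general
    {H : Type*} [NormedAddCommGroup H] [InnerProductSpace ℝ H]
    (T : H →L[ℝ] H)
    (Φ J : H → ℝ)
    (hJ : ∀ z : H, J z = 1 / 2 * ‖z‖ ^ 2 - 1 / 2 * (inner ℝ (T z) z : ℝ) + Φ z)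
    (lam₁ : ℝ) (hlam₁ : 0 < lam₁)
    (hT : ∀ z : H, 0 ≤ (inner ℝ (T z) z : ℝ) ∧ (inner ℝ (T z) z : ℝ) ≤ ‖z‖ ^ 2 / lam₁)
    (α p C : ℝ) (hα₀ : 0 < α) (hα₁ : α < lam₁) (hp : 2 < p)
    (hΦ : ∀ z : H, Φ z ≥ (1 - α) / 2 * (inner ℝ (T z) z : ℝ) - C * ‖z‖ ^ p) :
    ∃ ρ₀ > (0 : ℝ), ∀ z : H, 0 < ‖z‖ → ‖z‖ ≤ ρ₀ →
      J z ≥ 1 / 4 * (1 - α / lam₁) * ‖z‖ ^ 2 ∧ 0 < 1 / 4 * (1 - α / lam₁) * ‖z‖ ^ 2 := by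
  have hk : 0 < 1 / 4 * (1 - α / lam₁) := by
    have : α / lam₁ < 1 := (div_lt_one hlam₁).mpr hα₁
    linarith
  obtain ⟨ρ₀, hρ₀, h_small⟩ := exists_forall_mul_rpow_le_mul_sq (C := C) hk hp
  refine ⟨ρ₀, hρ₀, fun z hz hzρ => ⟨?_, by positivity⟩⟩
  have h_energy :=
    energy_ge_sub_rpow T Φ J hJ (fun z => (hT z).2) hα₀.le hΦ z
  linarith [h_small ‖z‖ hz hzρ]

/-- The origin is a strict local minimum of the energy functional under
conditions (H2), (H3) and the subcritical growth bound. -/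
theorem origin_is_strict_local_min
    {H : Type*} [NormedAddCommGroup H] [InnerProductSpace ℝ H]
    (T : H →L[ℝ] H)
    (Φ J : H → ℝ)
    (hJ : ∀ z : H, J z = 1 / 2 * ‖z‖ ^ 2 - 1 / 2 * (inner ℝ (T z) z : ℝ) + Φ z)
    (lam₁ : ℝ) (hlam₁ : 0 < lam₁)
    (hT : ∀ z : H, 0 ≤ (inner ℝ (T z) z : ℝ) ∧ (inner ℝ (T z) z : ℝ) ≤ ‖z‖ ^ 2 / lam₁)
    (α p C : ℝ) (hα₀ : 0 < α) (hα₁ : α < lam₁) (hp : 2 < p) (hC : 0 ≤ C)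
    (hΦ : ∀ z : H, Φ z ≥ (1 - α) / 2 * (inner ℝ (T z) z : ℝ) - C * ‖z‖ ^ p)
    (hΦ0 : Φ 0 = 0) :
    ∃ ρ₀ > (0 : ℝ), ∀ z : H, 0 < ‖z‖ → ‖z‖ ≤ ρ₀ →
      J z ≥ 1 / 4 * (1 - α / lam₁) * ‖z‖ ^ 2 ∧ 0 < 1 / 4 * (1 - α / lam₁) * ‖z‖ ^ 2 :=
  origin_is_strict_local_min_general T Φ J hJ lam₁ hlam₁ hT α p C hα₀ hα₁ hp hΦ
end
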